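/- arXiv:1810.06440 — 2 statements merged into one kernel-verified Lean document; each statement's English description precedes it below -/
import Mathlib

section
/- Fix μ₁ > 1 and μ₂ > 1. There exists a constant C = C(μ₁,μ₂) > 0 such that for every q ≥ 0 and every γ > 0, the set of ξ ∈ [−1/2,1/2]^ℤ for which there exists a finitely supported nonzero ℓ : ℤ → ℤ with |∑_{j∈ℤ} (j² + ξ_j ⟨j⟩^{−q}) ℓ_j| ≤ γ ∏_{n∈ℤ} (1 + |ℓ_n|^{μ₁} ⟨n⟩^{μ₂+q})^{−1} has measure at most C·γ with respect to the product over ℤ of the uniform probability measures on [−1/2,1/2]. -/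
open scoped BigOperators
open MeasureTheory

/-- `⟨j⟩ := max(|j|,1)` as a real number. -/
noncomputable def jap (j : ℤ) : ℝ := max (|(j : ℝ)|) 1

/-! For a fixed `ℓ ≠ 0` the resonance condition confines the linear form
`∑ⱼ ⟨j⟩^{-q} ℓⱼ ξⱼ` to an interval of length `2γ ∏ₙ (1 + |ℓₙ|^{μ₁} ⟨n⟩^{μ₂+q})⁻¹`. Integrating out
one coordinate `ξ_{j₀}`, `j₀ ∈ supp ℓ`, bounds its probability by that length divided by
`⟨j₀⟩^{-q} |ℓ_{j₀}|`; the loss `⟨j₀⟩^q` is paid by the factor `⟨j₀⟩^{μ₂+q}` of the product, which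
leaves `2γ ∏ₙ ⟨ℓₙ⟩^{-μ₁} ⟨n⟩^{-μ₂}`. Summed over all `ℓ`, these weights are at most
`∏ₙ (1 + ⟨n⟩^{-μ₂} ∑ₖ ⟨k⟩^{-μ₁}) ≤ exp (∑ₖ ⟨k⟩^{-μ₁} · ∑ₙ ⟨n⟩^{-μ₂})`, which is finite because
`μ₁, μ₂ > 1`. -/

open Set
open scoped ENNReal

theorem Real.volume_setOf_abs_add_mul_le (b c ε : ℝ) (hc : c ≠ 0) :
    volume {t : ℝ | |b + c * t| ≤ ε} = ENNReal.ofReal (2 * ε / |c|) := by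
  have hset : {t : ℝ | |b + c * t| ≤ ε} = (c * ·) ⁻¹' ((b + ·) ⁻¹' Icc (-ε) ε) := by
    ext t; exact abs_le (a := b + c * t)
  rw [hset, Real.volume_preimage_mul_left hc, measure_preimage_add, Real.volume_Icc,
    ← ENNReal.ofReal_mul (abs_nonneg _), abs_inv]
  congr 1
  ring

theorem MeasureTheory.Measure.pi_le_of_forall_update_preimage_le {ι : Type*} [Fintype ι]
    [DecidableEq ι] {X : ι → Type*} [∀ i, MeasurableSpace (X i)] (ν : ∀ i, Measure (X i))
    [∀ i, IsProbabilityMeasure (ν i)] {S : Set (∀ i, X i)} (hS : MeasurableSet S) (i₀ : ι)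
    (δ : ℝ≥0∞) (h : ∀ x, ν i₀ (Function.update x i₀ ⁻¹' S) ≤ δ) :
    Measure.pi ν S ≤ δ := by
  have hmarg : ∫⋯∫⁻_{i₀}, S.indicator 1 ∂ν ≤ ∫⋯∫⁻_{i₀}, (fun _ => δ) ∂ν := by
    intro x
    rw [lmarginal_singleton, lmarginal_singleton]
    simp only [lintegral_const, measure_univ, mul_one]
    calc ∫⁻ t, S.indicator 1 (Function.update x i₀ t) ∂ν i₀
        = ∫⁻ t, (Function.update x i₀ ⁻¹' S).indicator 1 t ∂ν i₀ := rfl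
      _ = ν i₀ (Function.update x i₀ ⁻¹' S) :=
        lintegral_indicator_one (measurable_update x hS)
      _ ≤ δ := h x
  rw [← lintegral_indicator_one hS]
  simpa using lintegral_le_of_lmarginal_le {i₀} (measurable_one.indicator hS)
    measurable_const hmarg

theorem MeasureTheory.Measure.pi_setOf_abs_add_sum_mul_le {ι : Type*} [Fintype ι]
    (ν : ι → Measure ℝ) [∀ i, IsProbabilityMeasure (ν i)] {i₀ : ι} (hν : ν i₀ ≤ volume)
    (a ε : ℝ) (c : ι → ℝ) (hc : c i₀ ≠ 0) :
    Measure.pi ν {x | |a + ∑ i, c i * x i| ≤ ε} ≤ ENNReal.ofReal (2 * ε / |c i₀|) := by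
  classical
  refine Measure.pi_le_of_forall_update_preimage_le ν
    (measurableSet_le (by fun_prop) measurable_const) i₀ _ fun x => ?_
  set b := a + ∑ i ∈ Finset.univ.erase i₀, c i * x i
  have hslice : Function.update x i₀ ⁻¹' {x | |a + ∑ i, c i * x i| ≤ ε} =
      {t | |b + c i₀ * t| ≤ ε} := by
    ext t
    have hsum : a + ∑ i, c i * Function.update x i₀ t i = b + c i₀ * t := by
      rw [← Finset.add_sum_erase _ _ (Finset.mem_univ i₀), Function.update_self,
        Finset.sum_congr rfl fun i hi => by rw [Function.update_of_ne (Finset.ne_of_mem_erase hi)]]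
      ring
    simp only [mem_preimage, mem_ofPred_eq, hsum]
  rw [hslice, ← Real.volume_setOf_abs_add_mul_le b _ ε hc]
  exact hν _

theorem Finset.sum_finsupp_prod_eq_prod_sum {ι M R : Type*} [Zero M] [CommSemiring R]
    (s : Finset ι) (t : ι → Finset M) (v : ι → M → R) :
    ∑ ℓ ∈ s.finsupp t, ∏ i ∈ s, v i (ℓ i) = ∏ i ∈ s, ∑ k ∈ t i, v i k := by
  classical
  rw [Finset.prod_sum, Finset.finsupp, Finset.sum_map]
  refine Finset.sum_congr rfl fun p _ => ?_
  rw [← Finset.prod_attach s]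
  refine Finset.prod_congr rfl fun i _ => ?_
  simp [Finsupp.indicator_of_mem i.2]

theorem sum_prod_support_le_exp {ι M : Type*} [Zero M] (a : M → ℝ) (b : ι → ℝ)
    (ha₀ : 0 ≤ a) (hb₀ : 0 ≤ b) (ha : Summable a) (hb : Summable b) (F : Finset (ι →₀ M)) :
    ∑ ℓ ∈ F, ∏ n ∈ ℓ.support, a (ℓ n) * b n ≤ Real.exp ((∑' k, a k) * ∑' n, b n) := by
  classical
  set s := F.sup Finsupp.support
  set T := F.biUnion Finsupp.frange
  have hT : (0 : M) ∉ T := by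
    simp only [T, Finset.mem_biUnion, Finsupp.mem_frange]
    tauto
  set v : ι → M → ℝ := fun n k => if k = 0 then 1 else a k * b n
  have hv : ∀ n k, 0 ≤ v n k := fun n k => by
    by_cases hk : k = 0 <;> simp [v, hk, mul_nonneg (ha₀ k) (hb₀ n)]
  have hF : F ⊆ s.finsupp fun _ => insert 0 T := by
    intro ℓ hℓ
    refine Finset.mem_finsupp_iff.2 ⟨Finset.le_sup (f := Finsupp.support) hℓ, fun i _ => ?_⟩
    by_cases h : ℓ i = 0
    · simp [h]
    · exact Finset.mem_insert_of_mem (Finset.mem_biUnion.2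
        ⟨ℓ, hℓ, Finsupp.mem_frange_of_mem (Finsupp.mem_support_iff.2 h)⟩)
  have hprod : ∀ ℓ ∈ s.finsupp (fun _ => insert 0 T),
      ∏ n ∈ ℓ.support, a (ℓ n) * b n = ∏ n ∈ s, v n (ℓ n) := by
    intro ℓ hℓ
    rw [← Finset.prod_subset (Finset.mem_finsupp_iff.1 hℓ).1 fun n _ hn => by
      simp [v, Finsupp.notMem_support_iff.1 hn]]
    exact Finset.prod_congr rfl fun n hn => by simp [v, Finsupp.mem_support_iff.1 hn]
  have hfactor : ∀ n, ∑ k ∈ insert 0 T, v n k ≤ Real.exp ((∑' k, a k) * b n) := by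
    intro n
    rw [Finset.sum_insert hT]
    calc v n 0 + ∑ k ∈ T, v n k = 1 + (∑ k ∈ T, a k) * b n := by
          rw [Finset.sum_mul]
          congr 1
          · simp [v]
          · exact Finset.sum_congr rfl fun k hk => by simp [v, ne_of_mem_of_not_mem hk hT]
      _ ≤ 1 + (∑' k, a k) * b n := by
          gcongr
          · exact hb₀ n
          · exact ha.sum_le_tsum T fun k _ => ha₀ k
      _ ≤ Real.exp ((∑' k, a k) * b n) := by linarith [Real.add_one_le_exp ((∑' k, a k) * b n)]
  calc ∑ ℓ ∈ F, ∏ n ∈ ℓ.support, a (ℓ n) * b n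
      ≤ ∑ ℓ ∈ s.finsupp (fun _ => insert 0 T), ∏ n ∈ ℓ.support, a (ℓ n) * b n :=
        Finset.sum_le_sum_of_subset_of_nonneg hF fun ℓ _ _ =>
          Finset.prod_nonneg fun n _ => mul_nonneg (ha₀ _) (hb₀ n)
    _ = ∏ n ∈ s, ∑ k ∈ insert 0 T, v n k := by
        rw [Finset.sum_congr rfl hprod, Finset.sum_finsupp_prod_eq_prod_sum]
    _ ≤ ∏ n ∈ s, Real.exp ((∑' k, a k) * b n) :=
        Finset.prod_le_prod (fun n _ => Finset.sum_nonneg fun k _ => hv n k) fun n _ => hfactor n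
    _ = Real.exp ((∑' k, a k) * ∑ n ∈ s, b n) := by rw [← Real.exp_sum, Finset.mul_sum]
    _ ≤ Real.exp ((∑' k, a k) * ∑' n, b n) := by
        gcongr
        · exact tsum_nonneg ha₀
        · exact hb.sum_le_tsum s fun n _ => hb₀ n

theorem tsum_ofReal_prod_support_le_exp {ι M : Type*} [Zero M] (a : M → ℝ) (b : ι → ℝ)
    (ha₀ : 0 ≤ a) (hb₀ : 0 ≤ b) (ha : Summable a) (hb : Summable b) :
    ∑' ℓ : ι →₀ M, ENNReal.ofReal (∏ n ∈ ℓ.support, a (ℓ n) * b n) ≤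
      ENNReal.ofReal (Real.exp ((∑' k, a k) * ∑' n, b n)) := by
  rw [ENNReal.tsum_eq_iSup_sum]
  refine iSup_le fun F => ?_
  rw [← ENNReal.ofReal_sum_of_nonneg fun ℓ _ =>
    Finset.prod_nonneg fun n _ => mul_nonneg (ha₀ _) (hb₀ n)]
  exact ENNReal.ofReal_le_ofReal (sum_prod_support_le_exp a b ha₀ hb₀ ha hb F)

theorem one_le_jap (n : ℤ) : 1 ≤ jap n := le_max_right _ _

theorem jap_pos (n : ℤ) : 0 < jap n := one_pos.trans_le (one_le_jap n)

theorem jap_rpow_pos (n : ℤ) (r : ℝ) : 0 < jap n ^ r := Real.rpow_pos_of_pos (jap_pos n) r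

theorem jap_rpow_nonneg (n : ℤ) (r : ℝ) : 0 ≤ jap n ^ r := (jap_rpow_pos n r).le

theorem inv_one_add_abs_rpow_mul_jap_rpow_nonneg (x μ₁ r : ℝ) (n : ℤ) :
    0 ≤ (1 + |x| ^ μ₁ * jap n ^ r)⁻¹ :=
  inv_nonneg.2 (add_nonneg zero_le_one
    (mul_nonneg (Real.rpow_nonneg (abs_nonneg x) μ₁) (jap_rpow_nonneg n r)))

theorem jap_of_ne_zero {n : ℤ} (hn : n ≠ 0) : jap n = |(n : ℝ)| :=
  max_eq_left (by exact_mod_cast Int.one_le_abs hn)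

theorem summable_jap_rpow_neg {r : ℝ} (hr : 1 < r) : Summable fun n : ℤ => jap n ^ (-r) := by
  refine ((Real.summable_abs_int_rpow hr).update 0 1).congr fun n => ?_
  rcases eq_or_ne n 0 with rfl | hn
  · simp [jap]
  · rw [Function.update_of_ne hn, jap_of_ne_zero hn]

noncomputable def resonantSet (μ₁ μ₂ q γ : ℝ) (ℓ : ℤ →₀ ℤ) : Set (ℤ → ℝ) :=
  {ξ | |∑ j ∈ ℓ.support, (((j : ℝ) ^ 2 + ξ j * jap j ^ (-q)) * (ℓ j : ℝ))| ≤
    γ * ∏ n ∈ ℓ.support, (1 + |(ℓ n : ℝ)| ^ μ₁ * jap n ^ (μ₂ + q))⁻¹}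

noncomputable def resonanceWeight (μ₁ μ₂ : ℝ) (ℓ : ℤ →₀ ℤ) : ℝ :=
  ∏ n ∈ ℓ.support, jap (ℓ n) ^ (-μ₁) * jap n ^ (-μ₂)

theorem inv_one_add_le_jap_rpow_neg (μ₁ μ₂ q : ℝ) {k : ℤ} (hk : k ≠ 0) (n : ℤ) :
    (1 + |(k : ℝ)| ^ μ₁ * jap n ^ (μ₂ + q))⁻¹ ≤
      jap k ^ (-μ₁) * jap n ^ (-μ₂) * jap n ^ (-q) := by
  have hpos : 0 < |(k : ℝ)| ^ μ₁ * jap n ^ (μ₂ + q) :=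
    mul_pos (Real.rpow_pos_of_pos (abs_pos.2 (Int.cast_ne_zero.2 hk)) _) (jap_rpow_pos n _)
  rw [Real.rpow_neg (jap_pos k).le, Real.rpow_neg (jap_pos n).le, Real.rpow_neg (jap_pos n).le,
    jap_of_ne_zero hk, mul_assoc, ← mul_inv, ← mul_inv, ← Real.rpow_add (jap_pos n)]
  exact inv_anti₀ hpos (le_add_of_nonneg_left zero_le_one)

theorem jap_rpow_mul_prod_le_resonanceWeight (μ₁ μ₂ : ℝ) {q : ℝ} (hq : 0 ≤ q) {ℓ : ℤ →₀ ℤ} {j₀ : ℤ}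
    (hj₀ : j₀ ∈ ℓ.support) :
    jap j₀ ^ q * ∏ n ∈ ℓ.support, (1 + |(ℓ n : ℝ)| ^ μ₁ * jap n ^ (μ₂ + q))⁻¹ ≤
      resonanceWeight μ₁ μ₂ ℓ := by
  have hdecay : ∏ n ∈ ℓ.support, jap n ^ (-q) ≤ jap j₀ ^ (-q) := by
    rw [← Finset.mul_prod_erase _ _ hj₀]
    refine mul_le_of_le_one_right (jap_rpow_nonneg _ _) ?_
    exact Finset.prod_le_one (fun n _ => jap_rpow_nonneg n _)
      fun n _ => Real.rpow_le_one_of_one_le_of_nonpos (one_le_jap n) (neg_nonpos.2 hq)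
  have hweight : 0 ≤ resonanceWeight μ₁ μ₂ ℓ := Finset.prod_nonneg fun n _ =>
    mul_nonneg (jap_rpow_nonneg _ _) (jap_rpow_nonneg n _)
  calc jap j₀ ^ q * ∏ n ∈ ℓ.support, (1 + |(ℓ n : ℝ)| ^ μ₁ * jap n ^ (μ₂ + q))⁻¹
      ≤ jap j₀ ^ q * (resonanceWeight μ₁ μ₂ ℓ * ∏ n ∈ ℓ.support, jap n ^ (-q)) := by
        rw [resonanceWeight, ← Finset.prod_mul_distrib]
        refine mul_le_mul_of_nonneg_left (Finset.prod_le_prod (fun n _ => ?_) fun n hn => ?_)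
          (jap_rpow_nonneg j₀ q)
        · exact inv_one_add_abs_rpow_mul_jap_rpow_nonneg _ μ₁ _ n
        · exact inv_one_add_le_jap_rpow_neg μ₁ μ₂ q (Finsupp.mem_support_iff.1 hn) n
    _ ≤ jap j₀ ^ q * (resonanceWeight μ₁ μ₂ ℓ * jap j₀ ^ (-q)) :=
        mul_le_mul_of_nonneg_left (mul_le_mul_of_nonneg_left hdecay hweight)
          (jap_rpow_nonneg j₀ q)
    _ = resonanceWeight μ₁ μ₂ ℓ := by
        rw [Real.rpow_neg (jap_pos j₀).le]
        field_simp [(jap_rpow_pos j₀ q).ne']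

theorem measure_resonantSet_le (μ₁ μ₂ : ℝ) {q γ : ℝ} (hq : 0 ≤ q) (hγ : 0 ≤ γ)
    {ℓ : ℤ →₀ ℤ} (hℓ : ℓ ≠ 0) (μ : Measure (ℤ → ℝ)) (ν : ℤ → Measure ℝ)
    [∀ i, IsProbabilityMeasure (ν i)] (hν : ∀ i, ν i ≤ volume)
    (hmarg : μ.map (fun ξ (i : ℓ.support) => ξ (i : ℤ)) = Measure.pi fun i : ℓ.support => ν i) :
    μ (resonantSet μ₁ μ₂ q γ ℓ) ≤ ENNReal.ofReal (2 * γ * resonanceWeight μ₁ μ₂ ℓ) := by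
  obtain ⟨j₀, hj₀⟩ := Finsupp.support_nonempty_iff.2 hℓ
  set P := ∏ n ∈ ℓ.support, (1 + |(ℓ n : ℝ)| ^ μ₁ * jap n ^ (μ₂ + q))⁻¹
  set c : ℓ.support → ℝ := fun j => jap j ^ (-q) * ℓ j
  have hsum : ∀ ξ : ℤ → ℝ, ∑ j ∈ ℓ.support, ((j : ℝ) ^ 2 + ξ j * jap j ^ (-q)) * ℓ j =
      ∑ j ∈ ℓ.support, (j : ℝ) ^ 2 * ℓ j + ∑ j, c j * ξ j := fun ξ => by
    rw [Finset.sum_coe_sort ℓ.support (fun j => jap j ^ (-q) * ℓ j * ξ j),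
      ← Finset.sum_add_distrib]
    exact Finset.sum_congr rfl fun j _ => by ring
  have hpre : resonantSet μ₁ μ₂ q γ ℓ = (fun ξ (j : ℓ.support) => ξ (j : ℤ)) ⁻¹'
      {x | |∑ j ∈ ℓ.support, (j : ℝ) ^ 2 * ℓ j + ∑ j, c j * x j| ≤ γ * P} := by
    ext ξ
    simp only [resonantSet, mem_preimage, mem_ofPred_eq, hsum, P]
  have hc : jap j₀ ^ (-q) ≤ |c ⟨j₀, hj₀⟩| := by
    rw [abs_mul, abs_of_pos (jap_rpow_pos j₀ _)]
    refine le_mul_of_one_le_right (jap_rpow_nonneg j₀ _) ?_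
    exact_mod_cast Int.one_le_abs (Finsupp.mem_support_iff.1 hj₀)
  have hc₀ : c ⟨j₀, hj₀⟩ ≠ 0 := abs_pos.1 ((jap_rpow_pos j₀ _).trans_le hc)
  rw [hpre, ← Measure.map_apply (by fun_prop) (measurableSet_le (by fun_prop) measurable_const),
    hmarg]
  refine (Measure.pi_setOf_abs_add_sum_mul_le (fun i : ℓ.support => ν i) (hν j₀) _ _ c hc₀).trans
    (ENNReal.ofReal_le_ofReal ?_)
  have hP : 0 ≤ P :=
    Finset.prod_nonneg fun n _ => inv_one_add_abs_rpow_mul_jap_rpow_nonneg _ μ₁ _ n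
  calc 2 * (γ * P) / |c ⟨j₀, hj₀⟩| ≤ 2 * (γ * P) / jap j₀ ^ (-q) :=
        div_le_div_of_nonneg_left (by positivity) (jap_rpow_pos j₀ _) hc
    _ = 2 * γ * (jap j₀ ^ q * P) := by
        rw [Real.rpow_neg (jap_pos j₀).le, div_inv_eq_mul]
        ring
    _ ≤ 2 * γ * resonanceWeight μ₁ μ₂ ℓ :=
        mul_le_mul_of_nonneg_left (jap_rpow_mul_prod_le_resonanceWeight μ₁ μ₂ hq hj₀)
          (by positivity)

instance : IsProbabilityMeasure (volume.restrict (Icc (-(1 / 2) : ℝ) (1 / 2))) :=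
  ⟨by norm_num [Real.volume_Icc]⟩

/-- Fix `μ₁, μ₂ > 1`. There is a constant `C = C(μ₁,μ₂) > 0` such that
for every `q ≥ 0` and `γ > 0`, the set of `ξ ∈ [−1/2,1/2]^ℤ` admitting a finitely supported
nonzero `ℓ : ℤ → ℤ` with
`|∑_j (j² + ξ_j ⟨j⟩^{−q}) ℓ_j| ≤ γ ∏_n (1 + |ℓ_n|^{μ₁} ⟨n⟩^{μ₂+q})⁻¹`
has measure at most `C·γ` with respect to the product over `ℤ` of the uniform probability
measures on `[−1/2,1/2]` (characterized here by its finite-dimensional marginals). -/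
theorem measure_resonant_frequencies_le
    (μ₁ μ₂ : ℝ) (hμ₁ : 1 < μ₁) (hμ₂ : 1 < μ₂) :
    ∃ C : ℝ, 0 < C ∧
      ∀ (q γ : ℝ), 0 ≤ q → 0 < γ →
        ∀ μ : Measure (ℤ → ℝ), IsProbabilityMeasure μ →
          (∀ s : Finset ℤ,
            μ.map (fun ξ (i : s) => ξ (i : ℤ)) =
              Measure.pi fun _ : s => volume.restrict (Set.Icc (-(1 / 2) : ℝ) (1 / 2))) →
          μ {ξ : ℤ → ℝ |
              (∀ i : ℤ, ξ i ∈ Set.Icc (-(1 / 2) : ℝ) (1 / 2)) ∧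
              ∃ ℓ : ℤ →₀ ℤ, ℓ ≠ 0 ∧
                |∑ j ∈ ℓ.support, (((j : ℝ) ^ 2 + ξ j * jap j ^ (-q)) * (ℓ j : ℝ))| ≤
                  γ * ∏ n ∈ ℓ.support, (1 + |(ℓ n : ℝ)| ^ μ₁ * jap n ^ (μ₂ + q))⁻¹}
            ≤ ENNReal.ofReal (C * γ) := by
  set K := Real.exp ((∑' k : ℤ, jap k ^ (-μ₁)) * ∑' n : ℤ, jap n ^ (-μ₂))
  refine ⟨2 * K, by positivity, fun q γ hq hγ μ _ hmarg => ?_⟩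
  have hweight : ∑' ℓ : ℤ →₀ ℤ, ENNReal.ofReal (resonanceWeight μ₁ μ₂ ℓ) ≤ ENNReal.ofReal K :=
    tsum_ofReal_prod_support_le_exp _ _ (fun k => jap_rpow_nonneg k _)
      (fun n => jap_rpow_nonneg n _) (summable_jap_rpow_neg hμ₁)
      (summable_jap_rpow_neg hμ₂)
  calc _ ≤ μ (⋃ ℓ ∈ {ℓ : ℤ →₀ ℤ | ℓ ≠ 0}, resonantSet μ₁ μ₂ q γ ℓ) :=
        measure_mono <| by
          rintro ξ ⟨-, ℓ, hℓ, hξ⟩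
          exact mem_biUnion hℓ hξ
    _ ≤ ∑' ℓ : {ℓ : ℤ →₀ ℤ | ℓ ≠ 0}, μ (resonantSet μ₁ μ₂ q γ ℓ) :=
        measure_biUnion_le μ (to_countable _) _
    _ ≤ ∑' ℓ : {ℓ : ℤ →₀ ℤ | ℓ ≠ 0},
          ENNReal.ofReal (2 * γ) * ENNReal.ofReal (resonanceWeight μ₁ μ₂ ℓ) :=
        ENNReal.tsum_le_tsum fun ℓ => by
          rw [← ENNReal.ofReal_mul (by positivity)]
          exact measure_resonantSet_le μ₁ μ₂ hq hγ.le ℓ.2 μ _ (fun _ => Measure.restrict_le_self)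
            (hmarg _)
    _ ≤ ∑' ℓ : ℤ →₀ ℤ, ENNReal.ofReal (2 * γ) * ENNReal.ofReal (resonanceWeight μ₁ μ₂ ℓ) :=
        ENNReal.tsum_comp_le_tsum_of_injective Subtype.val_injective _
    _ ≤ ENNReal.ofReal (2 * γ) * ENNReal.ofReal K := by
        rw [ENNReal.tsum_mul_left]
        gcongr
    _ = ENNReal.ofReal (2 * K * γ) := by
        rw [← ENNReal.ofReal_mul (by positivity)]
        congr 1
        ring
end

section
/- Let α, β : ℤ → ℕ be finitely supported with equal finite total mass |α| = |β| ≥ 1 and zero momentum ∑_{i∈ℤ} i·(α_i − β_i) = 0. Then for every j ∈ ℤ with α_j + β_j ≥ 1 one has ⌈j⌉² ≤ ∏_{i∈ℤ} ⌈i⌉^{α_i+β_i}. -/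
/-
Write `m i = α i + β i`. If `m j ≥ 2` the factor `⌈j⌉^{m j}` alone suffices, since every other
factor is `≥ 1`. If `m j = 1`, it remains to bound `⌈j⌉` by the product `P` over `i ≠ j`. Zero
momentum gives `|j| = |∑_{i ≠ j} i (α i - β i)| ≤ ∑_{i ≠ j} ⌈i⌉ m i`, and equal mass `≥ 1` gives
`∑_i m i ≥ 2`, so `∑_{i ≠ j} m i ≥ 1` and also `2 ≤ ∑_{i ≠ j} ⌈i⌉ m i`. Finally `x k ≤ x ^ k` for
`x ≥ 2`, and a sum of terms `≥ 2` is at most their product, whence `∑_{i ≠ j} ⌈i⌉ m i ≤ P`.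
-/

open scoped BigOperators

/-- `⌈j⌉ := max(|j|,2)` as a real number. -/
noncomputable def jml (j : ℤ) : ℝ := max (|(j : ℝ)|) 2

open Finset

section SumLeProd

variable {ι R : Type*} [CommSemiring R] [LinearOrder R] [IsStrictOrderedRing R]

theorem Finset.Nonempty.sum_le_prod_of_two_le {s : Finset ι} {f : ι → R} (hs : s.Nonempty)
    (hf : ∀ i ∈ s, 2 ≤ f i) : ∑ i ∈ s, f i ≤ ∏ i ∈ s, f i := by
  revert hf
  induction hs using Finset.Nonempty.cons_induction with
  | singleton a => simp
  | cons a t ha ht ih =>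
    intro hf
    have hf' : ∀ i ∈ t, 2 ≤ f i := fun i hi => hf i (mem_cons_of_mem hi)
    obtain ⟨b, hb⟩ := ht
    have hprod : 2 ≤ ∏ i ∈ t, f i :=
      calc 2 ≤ f b := hf' b hb
        _ ≤ ∑ i ∈ t, f i :=
          single_le_sum (fun i hi => zero_le_two.trans (hf' i hi)) hb
        _ ≤ ∏ i ∈ t, f i := ih hf'
    rw [sum_cons, prod_cons]
    calc f a + ∑ i ∈ t, f i ≤ f a + ∏ i ∈ t, f i := by gcongr; exact ih hf'
      _ ≤ f a * ∏ i ∈ t, f i := add_le_mul (hf a (mem_cons_self a t)) hprod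

theorem Finset.sum_le_prod_of_two_le {s : Finset ι} {f : ι → R} (hf : ∀ i ∈ s, 2 ≤ f i) :
    ∑ i ∈ s, f i ≤ ∏ i ∈ s, f i := by
  rcases s.eq_empty_or_nonempty with rfl | hs
  · simp
  · exact hs.sum_le_prod_of_two_le hf

theorem mul_le_pow_of_two_le {a : R} (ha : 2 ≤ a) (n : ℕ) : a * n ≤ a ^ n := by
  cases n with
  | zero => simp
  | succ k =>
    have hk : ((k + 1 : ℕ) : R) ≤ a ^ k :=
      calc ((k + 1 : ℕ) : R) ≤ 2 ^ k := by exact_mod_cast Nat.lt_two_pow_self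
        _ ≤ a ^ k := pow_le_pow_left₀ zero_le_two ha k
    rw [pow_succ']
    exact mul_le_mul_of_nonneg_left hk (zero_le_two.trans ha)

theorem Finset.sum_mul_le_prod_pow {s : Finset ι} {f : ι → R} (hf : ∀ i ∈ s, 2 ≤ f i)
    (m : ι → ℕ) : ∑ i ∈ s, f i * m i ≤ ∏ i ∈ s, f i ^ m i := by
  classical
  calc ∑ i ∈ s, f i * m i = ∑ i ∈ s with m i ≠ 0, f i * m i :=
        (sum_filter_of_ne (p := fun i => m i ≠ 0) fun i _ him hm0 => him (by simp [hm0])).symm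
    _ ≤ ∑ i ∈ s with m i ≠ 0, f i ^ m i :=
        sum_le_sum fun i hi => mul_le_pow_of_two_le (hf i (mem_filter.1 hi).1) (m i)
    _ ≤ ∏ i ∈ s with m i ≠ 0, f i ^ m i := sum_le_prod_of_two_le fun i hi => by
        rw [mem_filter] at hi
        exact (hf i hi.1).trans (le_self_pow₀ (one_le_two.trans (hf i hi.1)) hi.2)
    _ = ∏ i ∈ s, f i ^ m i :=
        prod_filter_of_ne (p := fun i => m i ≠ 0) fun i _ him hm0 => him (by simp [hm0])

end SumLeProd

theorem abs_le_sum_erase_abs_of_sum_eq_zero {ι R : Type*} [AddCommGroup R] [LinearOrder R]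
    [IsOrderedAddMonoid R] [DecidableEq ι] {s : Finset ι} {g : ι → R} (hg : ∑ i ∈ s, g i = 0)
    {j : ι} (hj : j ∈ s) : |g j| ≤ ∑ i ∈ s.erase j, |g i| := by
  have hgj : g j = -∑ i ∈ s.erase j, g i := by
    rw [eq_neg_iff_add_eq_zero, add_sum_erase s g hj, hg]
  rw [hgj, abs_neg]
  exact abs_sum_le_sum_abs g _

lemma two_le_jml (i : ℤ) : 2 ≤ jml i := le_max_right _ _

lemma abs_le_jml (i : ℤ) : |(i : ℝ)| ≤ jml i := le_max_left _ _

lemma abs_mul_sub_le_jml_mul (i : ℤ) (a b : ℕ) :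
    |(i : ℝ) * ((a : ℝ) - b)| ≤ jml i * ↑(a + b) := by
  rw [abs_mul, Nat.cast_add]
  refine mul_le_mul (abs_le_jml i) ?_ (abs_nonneg _) (zero_le_two.trans (two_le_jml i))
  simpa using abs_sub (a : ℝ) b

lemma abs_le_sum_erase_jml_mul {s : Finset ℤ} {a b : ℤ → ℕ}
    (hmom : ∑ i ∈ s, (i : ℝ) * ((a i : ℝ) - (b i : ℝ)) = 0) {j : ℤ} (hj : j ∈ s)
    (hj1 : a j + b j = 1) : |(j : ℝ)| ≤ ∑ i ∈ s.erase j, jml i * ↑(a i + b i) := by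
  have hgj : |(j : ℝ) * ((a j : ℝ) - b j)| = |(j : ℝ)| := by
    obtain ⟨ha, hb⟩ | ⟨ha, hb⟩ : (a j = 1 ∧ b j = 0) ∨ (a j = 0 ∧ b j = 1) := by omega
    all_goals simp [ha, hb]
  rw [← hgj]
  exact (abs_le_sum_erase_abs_of_sum_eq_zero hmom hj).trans
    (sum_le_sum fun i _ => abs_mul_sub_le_jml_mul i (a i) (b i))

lemma two_le_sum_erase_jml_mul (α β : ℤ →₀ ℕ)
    (hmass : (α.sum fun _ n => n) = β.sum fun _ n => n) (hmass1 : 1 ≤ α.sum fun _ n => n)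
    {j : ℤ} (hj : j ∈ α.support ∪ β.support) (hj1 : α j + β j = 1) :
    2 ≤ ∑ i ∈ (α.support ∪ β.support).erase j, jml i * ↑(α i + β i) := by
  set s := α.support ∪ β.support
  have htotal : 2 ≤ ∑ i ∈ s, (α i + β i) := by
    rw [sum_add_distrib, ← α.sum_of_support_subset subset_union_left (fun _ n => n) fun _ _ => rfl,
      ← β.sum_of_support_subset subset_union_right (fun _ n => n) fun _ _ => rfl]
    omega
  have hrest : 1 ≤ ∑ i ∈ s.erase j, (α i + β i) := by
    rw [← add_sum_erase s _ hj] at htotal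
    omega
  calc (2 : ℝ) ≤ 2 * ↑(∑ i ∈ s.erase j, (α i + β i)) := by norm_cast; omega
    _ = ∑ i ∈ s.erase j, 2 * ↑(α i + β i) := by rw [Nat.cast_sum, mul_sum]
    _ ≤ ∑ i ∈ s.erase j, jml i * ↑(α i + β i) :=
        sum_le_sum fun i _ => mul_le_mul_of_nonneg_right (two_le_jml i) (Nat.cast_nonneg _)

/-- If `α, β` have equal total mass `≥ 1` and zero momentum, then for every
`j` with `α_j + β_j ≥ 1` one has `⌈j⌉² ≤ ∏_i ⌈i⌉^{α_i+β_i}`. -/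
theorem jml_sq_le_prod
    (α β : ℤ →₀ ℕ)
    (hmass : (α.sum fun _ n => n) = β.sum fun _ n => n)
    (hmass1 : 1 ≤ α.sum fun _ n => n)
    (hmom : ∑ i ∈ α.support ∪ β.support, (i : ℝ) * ((α i : ℝ) - (β i : ℝ)) = 0)
    (j : ℤ) (hj : 1 ≤ α j + β j) :
    jml j ^ 2 ≤ ∏ i ∈ α.support ∪ β.support, jml i ^ (α i + β i) := by
  set s := α.support ∪ β.support
  have hjs : j ∈ s := by
    rw [mem_union, Finsupp.mem_support_iff, Finsupp.mem_support_iff]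
    omega
  have hjml : ∀ i ∈ s.erase j, 2 ≤ jml i := fun i _ => two_le_jml i
  rw [← mul_prod_erase s _ hjs]
  obtain h2 | h1 : 2 ≤ α j + β j ∨ α j + β j = 1 := by omega
  · calc jml j ^ 2 ≤ jml j ^ (α j + β j) :=
          pow_le_pow_right₀ (one_le_two.trans (two_le_jml j)) h2
      _ ≤ _ := le_mul_of_one_le_right (pow_nonneg (zero_le_two.trans (two_le_jml j)) _)
          (one_le_prod fun i hi => one_le_pow₀ (one_le_two.trans (hjml i hi)))
  · rw [h1, pow_two, pow_one]
    gcongr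
    · exact zero_le_two.trans (two_le_jml j)
    calc jml j ≤ ∑ i ∈ s.erase j, jml i * ↑(α i + β i) :=
          max_le (abs_le_sum_erase_jml_mul hmom hjs h1)
            (two_le_sum_erase_jml_mul α β hmass hmass1 hjs h1)
      _ ≤ _ := sum_mul_le_prod_pow hjml _
end
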